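/- If (g_k)_{k∈K} is a frame for H₁ with bounds A, B and (f_i)_{i∈I} is a frame for H₂ with bounds A', B', then (f_i ⊗ ḡ_k)_{(i,k)∈I×K} is a frame for HS(H₁, H₂) with bounds A·A' and B·B': A·A'·‖T‖_HS² ≤ Σ_{i,k} |⟨T, f_i ⊗ ḡ_k⟩_HS|² ≤ B·B'·‖T‖_HS² for all Hilbert–Schmidt operators T : H₁ → H₂. -/
import Mathlib


open scoped InnerProductSpace

/-- The rank-one operator `f ⊗ ḡ : h ↦ ⟨h,g⟩ f` (paper convention), i.e. `h ↦ ⟪g, h⟫_ℂ • f`. -/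
noncomputable def rankOne {H₁ H₂ : Type*} [NormedAddCommGroup H₁] [InnerProductSpace ℂ H₁]
    [NormedAddCommGroup H₂] [InnerProductSpace ℂ H₂] (f : H₂) (g : H₁) : H₁ →L[ℂ] H₂ :=
  (innerSL ℂ g).smulRight f

lemma parseval_hasSum {H : Type*} [NormedAddCommGroup H] [InnerProductSpace ℂ H]
    [CompleteSpace H] {ι : Type*} (e : HilbertBasis ι ℂ H) (y : H) :
    HasSum (fun j => ‖⟪e j, y⟫_ℂ‖ ^ 2) (‖y‖ ^ 2) := by
  have h := e.hasSum_inner_mul_inner y y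
  have h2 : (fun j => ⟪y, e j⟫_ℂ * ⟪e j, y⟫_ℂ) = fun j => ((‖⟪e j, y⟫_ℂ‖ ^ 2 : ℝ) : ℂ) := by
    funext j
    rw [← inner_conj_symm (e j) y, mul_comm, RCLike.conj_mul]
    rw [RCLike.norm_conj]; norm_cast
  rw [h2] at h
  have h3 := (Complex.hasSum_iff _ _).mp h |>.1
  simp only [Complex.ofReal_re] at h3
  simpa [← inner_self_eq_norm_sq (𝕜 := ℂ)] using h3

lemma frame_summable {H : Type*} [NormedAddCommGroup H] [InnerProductSpace ℂ H]
    {K : Type*} (g : K → H) (A : ℝ) (hA : 0 < A)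
    (h : ∀ x : H, A * ‖x‖ ^ 2 ≤ ∑' k, ‖⟪g k, x⟫_ℂ‖ ^ 2) (x : H) :
    Summable fun k => ‖⟪g k, x⟫_ℂ‖ ^ 2 := by
  by_cases hx : x = 0
  · simpa [hx] using summable_zero
  · by_contra hs
    have := h x
    rw [tsum_eq_zero_of_not_summable hs] at this
    have hx0 : ‖x‖ ≠ 0 := norm_ne_zero_iff.mpr hx
    have hx2 : 0 < ‖x‖ ^ 2 := by positivity
    nlinarith

/-- If `(g k)` is a frame for `H₁` with bounds `A, B` and `(f i)` a frame for `H₂`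
with bounds `A', B'`, then `(f i ⊗ ḡ k)` is a frame for `HS(H₁,H₂)` with bounds `A·A'`, `B·B'`:
`A·A'·‖T‖_HS² ≤ Σ_{i,k} |⟨T, f_i ⊗ ḡ_k⟩_HS|² ≤ B·B'·‖T‖_HS²` for every Hilbert–Schmidt `T`.
The HS inner product and norm are computed via an orthonormal basis `(e j)` of `H₁`. -/
theorem tensor_frame
    {H₁ H₂ : Type*} [NormedAddCommGroup H₁] [InnerProductSpace ℂ H₁] [CompleteSpace H₁]
    [NormedAddCommGroup H₂] [InnerProductSpace ℂ H₂] [CompleteSpace H₂]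
    {ι I K : Type*} (e : HilbertBasis ι ℂ H₁)
    (g : K → H₁) (f : I → H₂) (A B A' B' : ℝ)
    (hA : 0 < A) (hB : 0 < B) (hA' : 0 < A') (hB' : 0 < B')
    (hg : ∀ x : H₁,
      A * ‖x‖ ^ 2 ≤ ∑' k, ‖⟪g k, x⟫_ℂ‖ ^ 2 ∧ ∑' k, ‖⟪g k, x⟫_ℂ‖ ^ 2 ≤ B * ‖x‖ ^ 2)
    (hf : ∀ y : H₂,
      A' * ‖y‖ ^ 2 ≤ ∑' i, ‖⟪f i, y⟫_ℂ‖ ^ 2 ∧ ∑' i, ‖⟪f i, y⟫_ℂ‖ ^ 2 ≤ B' * ‖y‖ ^ 2)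
    (T : H₁ →L[ℂ] H₂) (hT : Summable fun j => ‖T (e j)‖ ^ 2) :
    A * A' * ∑' j, ‖T (e j)‖ ^ 2 ≤
        ∑' p : I × K, ‖∑' j, ⟪(rankOne (f p.1) (g p.2)) (e j), T (e j)⟫_ℂ‖ ^ 2 ∧
      ∑' p : I × K, ‖∑' j, ⟪(rankOne (f p.1) (g p.2)) (e j), T (e j)⟫_ℂ‖ ^ 2 ≤
        B * B' * ∑' j, ‖T (e j)‖ ^ 2 := by
  classical
  set y : I → H₁ := fun i => (ContinuousLinearMap.adjoint T) (f i) with hy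
  -- per-term identity
  have key : ∀ p : I × K,
      (∑' j, ⟪(rankOne (f p.1) (g p.2)) (e j), T (e j)⟫_ℂ) = ⟪y p.1, g p.2⟫_ℂ := by
    rintro ⟨i, k⟩
    have hterm : ∀ j, ⟪(rankOne (f i) (g k)) (e j), T (e j)⟫_ℂ
        = ⟪y i, e j⟫_ℂ * ⟪e j, g k⟫_ℂ := by
      intro j
      simp only [rankOne, ContinuousLinearMap.smulRight_apply, innerSL_apply_apply,
        inner_smul_left, hy, ContinuousLinearMap.adjoint_inner_left, inner_conj_symm]
      ring
    rw [tsum_congr hterm, e.tsum_inner_mul_inner]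
  have hgs : ∀ x, Summable fun k => ‖⟪g k, x⟫_ℂ‖ ^ 2 :=
    frame_summable g A hA (fun x => (hg x).1)
  have hfs : ∀ x, Summable fun i => ‖⟪f i, x⟫_ℂ‖ ^ 2 :=
    frame_summable f A' hA' (fun x => (hf x).1)
  -- Parseval for y i
  have hyi : ∀ i, HasSum (fun j => ‖⟪f i, T (e j)⟫_ℂ‖ ^ 2) (‖y i‖ ^ 2) := by
    intro i
    have h1 := parseval_hasSum e (y i)
    have h2 : (fun j => ‖⟪e j, y i⟫_ℂ‖ ^ 2) = fun j => ‖⟪f i, T (e j)⟫_ℂ‖ ^ 2 := by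
      funext j
      rw [hy, ContinuousLinearMap.adjoint_inner_right, norm_inner_symm]
    rwa [h2] at h1
  -- summability over ι × I
  have hG : Summable fun p : ι × I => ‖⟪f p.2, T (e p.1)⟫_ℂ‖ ^ 2 := by
    apply (summable_prod_of_nonneg (by intro p; positivity)).2
    exact ⟨fun j => hfs (T (e j)),
      Summable.of_nonneg_of_le (fun j => tsum_nonneg fun i => by positivity)
        (fun j => (hf (T (e j))).2) (hT.mul_left B')⟩
  have hrowsums : Summable fun j => ∑' i, ‖⟪f i, T (e j)⟫_ℂ‖ ^ 2 :=
    ((summable_prod_of_nonneg (by intro p; positivity)).1 hG).2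
  have hysum : Summable fun i => ‖y i‖ ^ 2 := by
    have h2 := ((summable_prod_of_nonneg
      (f := fun p : I × ι => ‖⟪f p.1, T (e p.2)⟫_ℂ‖ ^ 2)
      (by intro p; positivity)).1 hG.prod_symm).2
    have h3 : (fun i => ‖y i‖ ^ 2) = fun i => ∑' j, ‖⟪f i, T (e j)⟫_ℂ‖ ^ 2 :=
      funext fun i => ((hyi i).tsum_eq).symm
    rwa [h3]
  have hswap : ∑' i, ‖y i‖ ^ 2 = ∑' j, ∑' i, ‖⟪f i, T (e j)⟫_ℂ‖ ^ 2 := by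
    have e1 : ∑' i, ‖y i‖ ^ 2 = ∑' (i) (j), ‖⟪f i, T (e j)⟫_ℂ‖ ^ 2 :=
      tsum_congr fun i => ((hyi i).tsum_eq).symm
    rw [e1]
    exact Summable.tsum_comm hG
  have hSY_ub : ∑' i, ‖y i‖ ^ 2 ≤ B' * ∑' j, ‖T (e j)‖ ^ 2 := by
    rw [hswap, ← tsum_mul_left]
    exact Summable.tsum_le_tsum (fun j => (hf (T (e j))).2) hrowsums (hT.mul_left B')
  have hSY_lb : A' * ∑' j, ‖T (e j)‖ ^ 2 ≤ ∑' i, ‖y i‖ ^ 2 := by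
    rw [hswap, ← tsum_mul_left]
    exact Summable.tsum_le_tsum (fun j => (hf (T (e j))).1) (hT.mul_left A') hrowsums
  -- the F' family
  have hF : Summable fun p : I × K => ‖⟪g p.2, y p.1⟫_ℂ‖ ^ 2 := by
    apply (summable_prod_of_nonneg (by intro p; positivity)).2
    exact ⟨fun i => hgs (y i),
      Summable.of_nonneg_of_le (fun i => tsum_nonneg fun k => by positivity)
        (fun i => (hg (y i)).2) (hysum.mul_left B)⟩
  have hFrow : Summable fun i => ∑' k, ‖⟪g k, y i⟫_ℂ‖ ^ 2 :=
    ((summable_prod_of_nonneg (by intro p; positivity)).1 hF).2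
  have htot : ∑' p : I × K, ‖∑' j, ⟪(rankOne (f p.1) (g p.2)) (e j), T (e j)⟫_ℂ‖ ^ 2
      = ∑' (i) (k), ‖⟪g k, y i⟫_ℂ‖ ^ 2 := by
    rw [tsum_congr (fun p => by rw [key p, norm_inner_symm]), Summable.tsum_prod hF]
  have hub : ∑' (i) (k), ‖⟪g k, y i⟫_ℂ‖ ^ 2 ≤ B * ∑' i, ‖y i‖ ^ 2 := by
    rw [← tsum_mul_left]
    exact Summable.tsum_le_tsum (fun i => (hg (y i)).2) hFrow (hysum.mul_left B)
  have hlb : A * ∑' i, ‖y i‖ ^ 2 ≤ ∑' (i) (k), ‖⟪g k, y i⟫_ℂ‖ ^ 2 := by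
    rw [← tsum_mul_left]
    exact Summable.tsum_le_tsum (fun i => (hg (y i)).1) (hysum.mul_left A) hFrow
  constructor
  · rw [htot]
    calc A * A' * ∑' j, ‖T (e j)‖ ^ 2 = A * (A' * ∑' j, ‖T (e j)‖ ^ 2) := by ring
      _ ≤ A * ∑' i, ‖y i‖ ^ 2 := by
          exact mul_le_mul_of_nonneg_left hSY_lb hA.le
      _ ≤ _ := hlb
  · rw [htot]
    calc ∑' (i) (k), ‖⟪g k, y i⟫_ℂ‖ ^ 2 ≤ B * ∑' i, ‖y i‖ ^ 2 := hub
      _ ≤ B * (B' * ∑' j, ‖T (e j)‖ ^ 2) := mul_le_mul_of_nonneg_left hSY_ub hB.le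
      _ = B * B' * ∑' j, ‖T (e j)‖ ^ 2 := by ring
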